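/- arXiv:2309.01772 — 2 statements merged into one kernel-verified Lean document; each statement's English description precedes it below -/
import Mathlib

section
/- Consider, for each n ≥ 1, the instance with n products each of preference weight 1 and T = 2 customers. Then OPT^DP({1,…,n}) = (3/2)·(1 − 1/(n+1)) + n/(n+1)², while for every assortment S of cardinality k one has E(M(S)) = (k² + 3k)/(k+1)² ≤ 9/8. Consequently, for every δ > 0 there exists n such that OPT^DP({1,…,n}) ≥ (4/3 − δ) · max_{S ⊆ {1,…,n}} E(M(S)); in particular, the adaptivity gap of the maximum load assortment problem is at least 4/3. -/
open Finset

/-- MNL choice probability of product `i` when assortment `S` is offered. -/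
noncomputable def phi {n : ℕ} (v : Fin n → ℝ) (S : Finset (Fin n)) (i : Fin n) : ℝ :=
  v i / (1 + ∑ j ∈ S, v j)

/-- MNL no-purchase probability when assortment `S` is offered. -/
noncomputable def phi0 {n : ℕ} (v : Fin n → ℝ) (S : Finset (Fin n)) : ℝ :=
  1 / (1 + ∑ j ∈ S, v j)

/-- Probability of a single customer's choice when assortment `S` is offered:
`some i` (select product `i ∈ S`) has probability `φ_i(S)`, products outside `S`
are never selected, and `none` (no purchase) has probability `φ_0(S)`. -/
noncomputable def chooseProb {n : ℕ} (v : Fin n → ℝ) (S : Finset (Fin n)) :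
    Option (Fin n) → ℝ
  | none => phi0 v S
  | some i => if i ∈ S then phi v S i else 0

/-- `staticEM T v S` is the expected maximum load `E(M(S))` when assortment `S` is
statically offered to `T` customers making independent MNL choices:
`M(S) = max_{i ∈ S} L_i(S)` where `L_i(S)` counts the customers selecting `i`. -/
noncomputable def staticEM {n : ℕ} (T : ℕ) (v : Fin n → ℝ) (S : Finset (Fin n)) : ℝ :=
  ∑ f : Fin T → Option (Fin n),
    (∏ t, chooseProb v S (f t)) *
      ((S.sup fun i => (Finset.univ.filter fun t => f t = some i).card : ℕ) : ℝ)

/-- The dynamic-programming value functions `M_t(ℓ)` of the adaptive maximum load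
problem over the universe `U`: `M_0(ℓ) = max_i ℓ_i` and
`M_t(ℓ) = max_{S ⊆ U} (φ_0(S)·M_{t-1}(ℓ) + ∑_{i∈S} φ_i(S)·M_{t-1}(ℓ + e_i))`. -/
noncomputable def dpVal {n : ℕ} (v : Fin n → ℝ) (U : Finset (Fin n)) :
    ℕ → (Fin n → ℕ) → ℝ
  | 0, ℓ => ((Finset.univ.sup ℓ : ℕ) : ℝ)
  | t + 1, ℓ =>
      U.powerset.sup' ⟨∅, Finset.empty_mem_powerset U⟩ fun S =>
        phi0 v S * dpVal v U t ℓ +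
          ∑ i ∈ S, phi v S i * dpVal v U t (Function.update ℓ i (ℓ i + 1))

/-- `OPT^DP(U) = M_T(0)`: the optimal expected maximum load achievable by an adaptive
policy offering assortments from the universe `U` to `T` sequentially arriving customers
making independent MNL choices. -/
noncomputable def dpOpt {n : ℕ} (v : Fin n → ℝ) (U : Finset (Fin n)) (T : ℕ) : ℝ :=
  dpVal v U T fun _ => 0

section
variable {n : ℕ} (S : Finset (Fin n))

lemma phi_one (i : Fin n) : phi (fun _ => (1:ℝ)) S i = 1 / (1 + S.card) := by
  simp [phi]

lemma phi0_one : phi0 (fun _ => (1:ℝ)) S = 1 / (1 + S.card) := by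
  simp [phi0]

lemma sup_ind1 {j : Fin n} (hj : j ∈ S) :
    (S.sup fun i => if j = i then (1:ℕ) else 0) = 1 := by
  apply le_antisymm
  · exact Finset.sup_le fun i _ => by split <;> simp
  · simpa using Finset.le_sup (f := fun i => if j = i then (1:ℕ) else 0) hj

lemma sup_ind2 {j : Fin n} (hj : j ∈ S) :
    (S.sup fun i => (if j = i then 1 else 0) + (if j = i then (1:ℕ) else 0)) = 2 := by
  apply le_antisymm
  · exact Finset.sup_le fun i _ => by split <;> simp
  · simpa using Finset.le_sup
      (f := fun i => (if j = i then 1 else 0) + (if j = i then (1:ℕ) else 0)) hj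

lemma sup_ind3 {a b : Fin n} (ha : a ∈ S) (hab : a ≠ b) :
    (S.sup fun i => (if a = i then 1 else 0) + (if b = i then (1:ℕ) else 0)) = 1 := by
  apply le_antisymm
  · refine Finset.sup_le fun i _ => ?_
    rcases eq_or_ne a i with rfl | h
    · simp [Ne.symm hab]
    · simp only [if_neg h, zero_add]
      split <;> simp
  · have := Finset.le_sup
      (f := fun i => (if a = i then 1 else 0) + (if b = i then (1:ℕ) else 0)) ha
    simpa [Ne.symm hab] using this

lemma static_eq : staticEM 2 (fun _ => (1:ℝ)) S =
    ((S.card : ℝ)^2 + 3 * S.card) / ((S.card : ℝ) + 1)^2 := by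
  classical
  have key : staticEM 2 (fun _ => (1:ℝ)) S =
      ∑ a : Option (Fin n), ∑ b : Option (Fin n),
        (chooseProb (fun _ => (1:ℝ)) S a * chooseProb (fun _ => (1:ℝ)) S b) *
        (((S.sup fun i => ((if a = some i then 1 else 0) + (if b = some i then 1 else 0))) : ℕ) : ℝ) := by
    rw [staticEM, ← Equiv.sum_comp (piFinTwoEquiv fun _ => Option (Fin n)).symm,
      Fintype.sum_prod_type]
    refine Finset.sum_congr rfl fun a _ => Finset.sum_congr rfl fun b _ => ?_
    have h0 : (piFinTwoEquiv fun _ => Option (Fin n)).symm (a, b) 0 = a := rfl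
    have h1 : (piFinTwoEquiv fun _ => Option (Fin n)).symm (a, b) 1 = b := rfl
    rw [Fin.prod_univ_two, h0, h1]
    have hsup : (S.sup fun i => (Finset.univ.filter fun t =>
        (piFinTwoEquiv fun _ => Option (Fin n)).symm (a, b) t = some i).card) =
        S.sup fun i => ((if a = some i then 1 else 0) + (if b = some i then 1 else 0) : ℕ) :=
      Finset.sup_congr rfl fun i _ => by
        rw [Finset.card_filter, Fin.sum_univ_two, h0, h1]
    rw [hsup]
  have cnone : chooseProb (fun _ => (1:ℝ)) S none = 1 / (1 + (S.card:ℝ)) := by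
    rw [show chooseProb (fun _ => (1:ℝ)) S none = phi0 (fun _ => (1:ℝ)) S from rfl, phi0_one]
  have csome : ∀ j : Fin n, chooseProb (fun _ => (1:ℝ)) S (some j) =
      if j ∈ S then 1 / (1 + (S.card:ℝ)) else 0 := by
    intro j
    rw [show chooseProb (fun _ => (1:ℝ)) S (some j) =
      if j ∈ S then phi (fun _ => (1:ℝ)) S j else 0 from rfl]
    split <;> [rw [phi_one]; rfl]
  set q : ℝ := 1 / (1 + (S.card:ℝ)) with hqdef
  rw [key]
  simp only [Fintype.sum_option]
  have h1 : (chooseProb (fun _ => (1:ℝ)) S none * chooseProb (fun _ => (1:ℝ)) S none) *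
      (((S.sup fun i => ((if (none : Option (Fin n)) = some i then 1 else 0) +
        (if (none : Option (Fin n)) = some i then 1 else 0))) : ℕ) : ℝ) = 0 := by
    have hs : (S.sup fun i => ((if (none : Option (Fin n)) = some i then 1 else 0) +
        (if (none : Option (Fin n)) = some i then (1:ℕ) else 0))) = 0 := by simp
    rw [hs]; simp
  have h2 : ∀ b : Fin n, (chooseProb (fun _ => (1:ℝ)) S none *
        chooseProb (fun _ => (1:ℝ)) S (some b)) *
      (((S.sup fun i => ((if (none : Option (Fin n)) = some i then 1 else 0) +
        (if some b = some i then 1 else 0))) : ℕ) : ℝ) =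
      if b ∈ S then q^2 else 0 := by
    intro b
    by_cases hb : b ∈ S
    · have hs : (S.sup fun i => ((if (none : Option (Fin n)) = some i then 1 else 0) +
          (if some b = some i then (1:ℕ) else 0))) = 1 := by
        simpa using sup_ind1 S hb
      rw [hs, cnone, csome b, if_pos hb, if_pos hb, Nat.cast_one, hqdef]; ring
    · simp [chooseProb, hb]
  have h3 : ∀ a : Fin n, (chooseProb (fun _ => (1:ℝ)) S (some a) *
        chooseProb (fun _ => (1:ℝ)) S none) *
      (((S.sup fun i => ((if some a = some i then 1 else 0) +
        (if (none : Option (Fin n)) = some i then 1 else 0))) : ℕ) : ℝ) =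
      if a ∈ S then q^2 else 0 := by
    intro a
    by_cases ha : a ∈ S
    · have hs : (S.sup fun i => ((if some a = some i then 1 else 0) +
          (if (none : Option (Fin n)) = some i then (1:ℕ) else 0))) = 1 := by
        simpa using sup_ind1 S ha
      rw [hs, cnone, csome a, if_pos ha, if_pos ha, Nat.cast_one, hqdef]; ring
    · simp [chooseProb, ha]
  have h4 : ∀ a b : Fin n, (chooseProb (fun _ => (1:ℝ)) S (some a) *
        chooseProb (fun _ => (1:ℝ)) S (some b)) *
      (((S.sup fun i => ((if some a = some i then 1 else 0) +
        (if some b = some i then 1 else 0))) : ℕ) : ℝ) =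
      if a ∈ S then (if b ∈ S then q^2 * (if a = b then 2 else 1) else 0) else 0 := by
    intro a b
    by_cases ha : a ∈ S
    · by_cases hb : b ∈ S
      · rcases eq_or_ne a b with rfl | hab
        · have hs : (S.sup fun i => ((if some a = some i then 1 else 0) +
              (if some a = some i then (1:ℕ) else 0))) = 2 := by
            simpa using sup_ind2 S ha
          rw [hs, csome a, if_pos ha, if_pos ha, if_pos ha, if_pos rfl, Nat.cast_two, hqdef]
          ring
        · have hs : (S.sup fun i => ((if some a = some i then 1 else 0) +
              (if some b = some i then (1:ℕ) else 0))) = 1 := by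
            simpa using sup_ind3 S ha hab
          rw [hs, csome a, csome b, if_pos ha, if_pos hb, if_pos ha, if_pos hb, if_neg hab,
            Nat.cast_one, hqdef]
          ring
      · simp [chooseProb, hb]
    · simp [chooseProb, ha]
  rw [h1]
  have e2 : ∑ b : Fin n, (chooseProb (fun _ => (1:ℝ)) S none *
        chooseProb (fun _ => (1:ℝ)) S (some b)) *
      (((S.sup fun i => ((if (none : Option (Fin n)) = some i then 1 else 0) +
        (if some b = some i then 1 else 0))) : ℕ) : ℝ) = S.card * q^2 := by
    rw [Finset.sum_congr rfl fun b _ => h2 b, Finset.sum_ite_mem, Finset.univ_inter,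
      Finset.sum_const, nsmul_eq_mul]
  have e34 : ∑ a : Fin n, ((chooseProb (fun _ => (1:ℝ)) S (some a) *
        chooseProb (fun _ => (1:ℝ)) S none) *
      (((S.sup fun i => ((if some a = some i then 1 else 0) +
        (if (none : Option (Fin n)) = some i then 1 else 0))) : ℕ) : ℝ) +
      ∑ b : Fin n, (chooseProb (fun _ => (1:ℝ)) S (some a) *
        chooseProb (fun _ => (1:ℝ)) S (some b)) *
      (((S.sup fun i => ((if some a = some i then 1 else 0) +
        (if some b = some i then 1 else 0))) : ℕ) : ℝ)) =
      S.card * q^2 + ((S.card:ℝ)^2 + S.card) * q^2 := by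
    rw [Finset.sum_add_distrib]
    have p3 : ∑ a : Fin n, (chooseProb (fun _ => (1:ℝ)) S (some a) *
        chooseProb (fun _ => (1:ℝ)) S none) *
      (((S.sup fun i => ((if some a = some i then 1 else 0) +
        (if (none : Option (Fin n)) = some i then 1 else 0))) : ℕ) : ℝ) = S.card * q^2 := by
      rw [Finset.sum_congr rfl fun a _ => h3 a, Finset.sum_ite_mem, Finset.univ_inter,
        Finset.sum_const, nsmul_eq_mul]
    have p4 : ∑ a : Fin n, ∑ b : Fin n, (chooseProb (fun _ => (1:ℝ)) S (some a) *
        chooseProb (fun _ => (1:ℝ)) S (some b)) *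
      (((S.sup fun i => ((if some a = some i then 1 else 0) +
        (if some b = some i then 1 else 0))) : ℕ) : ℝ) = ((S.card:ℝ)^2 + S.card) * q^2 := by
      have step : ∀ a : Fin n, ∑ b : Fin n, (chooseProb (fun _ => (1:ℝ)) S (some a) *
          chooseProb (fun _ => (1:ℝ)) S (some b)) *
        (((S.sup fun i => ((if some a = some i then 1 else 0) +
          (if some b = some i then 1 else 0))) : ℕ) : ℝ) =
          if a ∈ S then ((S.card:ℝ) + 1) * q^2 else 0 := by
        intro a
        rw [Finset.sum_congr rfl fun b _ => h4 a b]
        by_cases ha : a ∈ S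
        · simp only [if_pos ha]
          rw [Finset.sum_ite_mem, Finset.univ_inter]
          have hrw : ∑ b ∈ S, q^2 * (if a = b then 2 else 1) =
              ∑ b ∈ S, (q^2 + q^2 * (if b = a then 1 else 0)) := by
            refine Finset.sum_congr rfl fun b _ => ?_
            rcases eq_or_ne a b with rfl | hab
            · simp; ring
            · simp [hab, hab.symm]
          rw [hrw, Finset.sum_add_distrib, Finset.sum_const, ← Finset.mul_sum,
            Finset.sum_ite_eq' S a (fun _ => (1:ℝ)), if_pos ha, nsmul_eq_mul]
          ring
        · simp [ha]
      rw [Finset.sum_congr rfl fun a _ => step a, Finset.sum_ite_mem, Finset.univ_inter,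
        Finset.sum_const, nsmul_eq_mul]
      ring
    rw [p3, p4]
  rw [e2, e34, hqdef]
  have hA : (1:ℝ) + (S.card:ℝ) ≠ 0 := by positivity
  field_simp
  ring

end

lemma phi_one' {n : ℕ} (S : Finset (Fin n)) (i : Fin n) :
    phi (fun _ => (1:ℝ)) S i = 1 / (1 + S.card) := by simp [phi]
lemma phi0_one' {n : ℕ} (S : Finset (Fin n)) :
    phi0 (fun _ => (1:ℝ)) S = 1 / (1 + S.card) := by simp [phi0]

lemma dpVal_zero {n : ℕ} (v : Fin n → ℝ) (U : Finset (Fin n)) (ℓ : Fin n → ℕ) :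
    dpVal v U 0 ℓ = ((Finset.univ.sup ℓ : ℕ) : ℝ) := rfl

lemma dpVal_step {n : ℕ} (v : Fin n → ℝ) (U : Finset (Fin n)) (t : ℕ) (ℓ : Fin n → ℕ) :
    dpVal v U (t + 1) ℓ =
      U.powerset.sup' ⟨∅, Finset.empty_mem_powerset U⟩ fun S =>
        phi0 v S * dpVal v U t ℓ +
          ∑ i ∈ S, phi v S i * dpVal v U t (Function.update ℓ i (ℓ i + 1)) := rfl

lemma supL1 {n : ℕ} (i : Fin n) (m : ℕ) :
    Finset.univ.sup (Function.update (fun _ : Fin n => 0) i m) = m := by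
  apply le_antisymm
  · refine Finset.sup_le fun j _ => ?_
    rcases eq_or_ne j i with rfl | h
    · simp
    · simp [Function.update_of_ne h]
  · simpa using Finset.le_sup (f := Function.update (fun _ : Fin n => 0) i m) (mem_univ i)

lemma supL2 {n : ℕ} {i j : Fin n} (h : j ≠ i) :
    Finset.univ.sup (Function.update (Function.update (fun _ : Fin n => 0) i 1) j 1) = 1 := by
  apply le_antisymm
  · refine Finset.sup_le fun x _ => ?_
    rcases eq_or_ne x j with rfl | hxj
    · simp
    · rw [Function.update_of_ne hxj]
      rcases eq_or_ne x i with rfl | hxi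
      · simp
      · simp [Function.update_of_ne hxi]
  · have h1 : Function.update (Function.update (fun _ : Fin n => 0) i 1) j 1 i = 1 := by
      rw [Function.update_of_ne (Ne.symm h), Function.update_self]
    refine le_trans ?_ (Finset.le_sup
      (f := Function.update (Function.update (fun _ : Fin n => 0) i 1) j 1) (mem_univ i))
    rw [h1]

section
variable {n : ℕ}

/-- value at time 1 starting from 0 loads -/
lemma dpA (hn : 1 ≤ n) :
    dpVal (fun _ : Fin n => (1:ℝ)) Finset.univ 1 (fun _ => 0) = n / (n + 1) := by
  have hval : ∀ S : Finset (Fin n),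
      phi0 (fun _ : Fin n => (1:ℝ)) S * dpVal (fun _ : Fin n => (1:ℝ)) Finset.univ 0 (fun _ => 0) +
        ∑ i ∈ S, phi (fun _ : Fin n => (1:ℝ)) S i *
          dpVal (fun _ : Fin n => (1:ℝ)) Finset.univ 0
            (Function.update (fun _ => 0) i ((fun _ : Fin n => 0) i + 1)) =
      S.card / (1 + S.card) := by
    intro S
    have hz : dpVal (fun _ : Fin n => (1:ℝ)) Finset.univ 0 (fun _ => 0) = 0 := by
      rw [dpVal_zero]; simp
    have hone : ∀ i : Fin n, dpVal (fun _ : Fin n => (1:ℝ)) Finset.univ 0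
        (Function.update (fun _ => 0) i ((fun _ : Fin n => 0) i + 1)) = 1 := by
      intro i
      rw [dpVal_zero]
      simp only [zero_add]
      rw [supL1 i 1, Nat.cast_one]
    rw [hz, mul_zero, zero_add, Finset.sum_congr rfl fun i hi => by rw [hone i, mul_one, phi_one'],
      Finset.sum_const, nsmul_eq_mul]
    ring
  rw [show (1:ℕ) = 0 + 1 from rfl, dpVal_step]
  apply le_antisymm
  · refine Finset.sup'_le _ _ fun S hS => ?_
    rw [hval S]
    have hk : (S.card : ℝ) ≤ n := by
      have := Finset.card_le_univ S
      rw [Fintype.card_fin] at this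
      exact_mod_cast this
    rw [div_le_div_iff₀ (by positivity) (by positivity)]
    nlinarith
  · have hmem : (Finset.univ : Finset (Fin n)) ∈ (Finset.univ : Finset (Fin n)).powerset :=
      Finset.mem_powerset_self _
    refine le_trans ?_ (Finset.le_sup' _ hmem)
    rw [hval Finset.univ, Finset.card_univ, Fintype.card_fin]
    rw [div_le_div_iff₀ (by positivity) (by positivity)]
    ring_nf
    exact le_refl _

/-- value at time 1 starting from a single unit load -/
lemma dpB (i : Fin n) :
    dpVal (fun _ : Fin n => (1:ℝ)) Finset.univ 1
      (Function.update (fun _ => 0) i ((fun _ : Fin n => 0) i + 1)) = 3 / 2 := by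
  have hℓ : (Function.update (fun _ : Fin n => 0) i ((fun _ : Fin n => 0) i + 1)) =
      Function.update (fun _ => 0) i 1 := by norm_num
  rw [hℓ]
  set ℓB : Fin n → ℕ := Function.update (fun _ => 0) i 1 with hℓB
  have hval : ∀ S : Finset (Fin n),
      phi0 (fun _ : Fin n => (1:ℝ)) S * dpVal (fun _ : Fin n => (1:ℝ)) Finset.univ 0 ℓB +
        ∑ j ∈ S, phi (fun _ : Fin n => (1:ℝ)) S j *
          dpVal (fun _ : Fin n => (1:ℝ)) Finset.univ 0 (Function.update ℓB j (ℓB j + 1)) =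
      (1 + S.card + if i ∈ S then 1 else 0) / (1 + S.card) := by
    intro S
    have h0 : dpVal (fun _ : Fin n => (1:ℝ)) Finset.univ 0 ℓB = 1 := by
      rw [dpVal_zero, hℓB, supL1, Nat.cast_one]
    have hX : ∀ j : Fin n, dpVal (fun _ : Fin n => (1:ℝ)) Finset.univ 0
        (Function.update ℓB j (ℓB j + 1)) = if j = i then 2 else 1 := by
      intro j
      rcases eq_or_ne j i with rfl | hji
      · have h1 : ℓB j = 1 := by rw [hℓB, Function.update_self]
        rw [dpVal_zero, h1, hℓB, Function.update_idem, supL1, if_pos rfl]; norm_num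
      · have h1 : ℓB j = 0 := by rw [hℓB, Function.update_of_ne hji]
        rw [dpVal_zero, h1, hℓB, supL2 hji, Nat.cast_one, if_neg hji]
    rw [h0, mul_one, Finset.sum_congr rfl fun j _ => by rw [hX j, phi_one'],
      phi0_one']
    have hsum : ∑ j ∈ S, (1 / (1 + (S.card:ℝ))) * (if j = i then 2 else 1) =
        (1 / (1 + (S.card:ℝ))) * (S.card + if i ∈ S then 1 else 0) := by
      rw [← Finset.mul_sum]
      congr 1
      have : ∀ j : Fin n, ((if j = i then 2 else 1) : ℝ) = 1 + if j = i then 1 else 0 := by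
        intro j; split <;> norm_num
      rw [Finset.sum_congr rfl fun j _ => this j, Finset.sum_add_distrib, Finset.sum_const,
        Finset.sum_ite_eq' S i (fun _ => (1:ℝ)), nsmul_eq_mul, mul_one]
    rw [hsum]
    field_simp
    ring
  have hstep := dpVal_step (fun _ : Fin n => (1:ℝ)) Finset.univ 0 ℓB
  rw [Nat.zero_add] at hstep
  rw [hstep]
  apply le_antisymm
  · refine Finset.sup'_le _ _ fun S hS => ?_
    rw [hval S]
    by_cases hi : i ∈ S
    · have hk : (1:ℝ) ≤ S.card := by
        have := Finset.card_pos.mpr ⟨i, hi⟩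
        exact_mod_cast this
      rw [if_pos hi, div_le_div_iff₀ (by positivity) (by norm_num)]
      nlinarith
    · rw [if_neg hi, add_zero, div_le_div_iff₀ (by positivity) (by norm_num)]
      nlinarith [Nat.cast_nonneg (α := ℝ) S.card]
  · have hmem : ({i} : Finset (Fin n)) ∈ (Finset.univ : Finset (Fin n)).powerset := by
      simp
    refine le_trans ?_ (Finset.le_sup' _ hmem)
    rw [hval {i}]
    simp
    norm_num

/-- the main dp computation -/
lemma dpMain (hn : 1 ≤ n) :
    dpOpt (fun _ : Fin n => (1:ℝ)) Finset.univ 2 =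
      (3 / 2) * (1 - 1 / ((n : ℝ) + 1)) + (n : ℝ) / ((n : ℝ) + 1) ^ 2 := by
  have hn1 : ((n:ℝ) + 1) ≠ 0 := by positivity
  have hA : dpVal (fun _ : Fin n => (1:ℝ)) Finset.univ 1 (fun _ => 0) = n / (n + 1) := dpA hn
  have hval : ∀ S : Finset (Fin n),
      phi0 (fun _ : Fin n => (1:ℝ)) S *
          dpVal (fun _ : Fin n => (1:ℝ)) Finset.univ 1 (fun _ => 0) +
        ∑ i ∈ S, phi (fun _ : Fin n => (1:ℝ)) S i *
          dpVal (fun _ : Fin n => (1:ℝ)) Finset.univ 1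
            (Function.update (fun _ => 0) i ((fun _ : Fin n => 0) i + 1)) =
      ((n:ℝ) / (n + 1) + (3/2) * S.card) / (1 + S.card) := by
    intro S
    rw [hA, Finset.sum_congr rfl fun i _ => by rw [dpB i, phi_one'], Finset.sum_const,
      nsmul_eq_mul, phi0_one']
    field_simp
  rw [dpOpt]
  have hstep := dpVal_step (fun _ : Fin n => (1:ℝ)) Finset.univ 1 (fun _ => 0)
  rw [show (1:ℕ) + 1 = 2 from rfl] at hstep
  rw [hstep]
  have hAle : (n:ℝ) / (n + 1) ≤ 3/2 := by
    rw [div_le_iff₀ (by positivity)]; nlinarith [Nat.cast_nonneg (α := ℝ) n]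
  apply le_antisymm
  · refine Finset.sup'_le _ _ fun S hS => ?_
    rw [hval S]
    have hk : (S.card : ℝ) ≤ n := by
      have := Finset.card_le_univ S
      rw [Fintype.card_fin] at this
      exact_mod_cast this
    have target : ((n:ℝ) / (n + 1) + (3/2) * n) / (1 + n) =
        (3 / 2) * (1 - 1 / ((n : ℝ) + 1)) + (n : ℝ) / ((n : ℝ) + 1) ^ 2 := by
      field_simp
      ring
    rw [← target, div_le_div_iff₀ (by positivity) (by positivity)]
    have hkn : (0:ℝ) ≤ (n:ℝ) - S.card := by linarith
    nlinarith [mul_nonneg (by linarith : (0:ℝ) ≤ 3/2 - (n:ℝ)/(n+1)) hkn]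
  · have hmem : (Finset.univ : Finset (Fin n)) ∈ (Finset.univ : Finset (Fin n)).powerset :=
      Finset.mem_powerset_self _
    refine le_trans ?_ (Finset.le_sup' _ hmem)
    rw [hval Finset.univ, Finset.card_univ, Fintype.card_fin]
    rw [← sub_nonneg]
    have : ((n:ℝ) / (n + 1) + 3 / 2 * ↑n) / (1 + ↑n) -
        ((3 / 2) * (1 - 1 / ((n : ℝ) + 1)) + (n : ℝ) / ((n : ℝ) + 1) ^ 2) = 0 := by
      field_simp
      ring
    linarith [this.ge]


end

/-- For the instance with `n` products, each of preference weight 1, and `T = 2`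
customers: the optimal dynamic value equals `(3/2)(1 − 1/(n+1)) + n/(n+1)²`; every
assortment `S` of cardinality `k` has expected maximum load `(k² + 3k)/(k+1)² ≤ 9/8`;
consequently, for every `δ > 0` there is `n` whose optimal dynamic value is at least
`(4/3 − δ)` times the optimal static value, so the adaptivity gap is at least 4/3. -/
theorem adaptivity_gap_at_least_four_thirds :
    (∀ n : ℕ, 1 ≤ n →
      dpOpt (fun _ : Fin n => (1 : ℝ)) Finset.univ 2 =
        (3 / 2) * (1 - 1 / ((n : ℝ) + 1)) + (n : ℝ) / ((n : ℝ) + 1) ^ 2) ∧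
    (∀ n : ℕ, ∀ S : Finset (Fin n),
      staticEM 2 (fun _ : Fin n => (1 : ℝ)) S =
          ((S.card : ℝ) ^ 2 + 3 * (S.card : ℝ)) / ((S.card : ℝ) + 1) ^ 2 ∧
        staticEM 2 (fun _ : Fin n => (1 : ℝ)) S ≤ 9 / 8) ∧
    (∀ δ : ℝ, 0 < δ → ∃ n : ℕ, 1 ≤ n ∧
      dpOpt (fun _ : Fin n => (1 : ℝ)) Finset.univ 2 ≥
        (4 / 3 - δ) *
          Finset.univ.powerset.sup' ⟨∅, Finset.empty_mem_powerset _⟩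
            (staticEM 2 (fun _ : Fin n => (1 : ℝ)))) := by
  refine ⟨fun n hn => dpMain hn, fun n S => ⟨static_eq S, ?_⟩, fun δ hδ => ?_⟩
  · rw [static_eq S]
    have hc : (0:ℝ) ≤ (S.card:ℝ) := Nat.cast_nonneg _
    rw [div_le_iff₀ (by positivity)]
    nlinarith [sq_nonneg ((S.card:ℝ) - 3)]
  · refine ⟨max 1 (Nat.ceil (1/δ)), le_max_left _ _, ?_⟩
    set n : ℕ := max 1 (Nat.ceil (1/δ)) with hndef
    have hn : 1 ≤ n := le_max_left _ _
    have hnR : (1:ℝ) ≤ (n:ℝ) := by exact_mod_cast hn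
    have hx1 : (0:ℝ) < (n:ℝ) + 1 := by positivity
    have hceil : (1/δ : ℝ) ≤ (n:ℝ) := by
      refine le_trans (Nat.le_ceil _) ?_
      exact_mod_cast le_max_right 1 (Nat.ceil (1/δ))
    -- the static sup is between 0 and 9/8
    have hsup_le : Finset.univ.powerset.sup' ⟨∅, Finset.empty_mem_powerset _⟩
        (staticEM 2 (fun _ : Fin n => (1 : ℝ))) ≤ 9/8 := by
      refine Finset.sup'_le _ _ fun S _ => ?_
      rw [static_eq S]
      have hc : (0:ℝ) ≤ (S.card:ℝ) := Nat.cast_nonneg _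
      rw [div_le_iff₀ (by positivity)]
      nlinarith [sq_nonneg ((S.card:ℝ) - 3)]
    have hsup_nonneg : (0:ℝ) ≤ Finset.univ.powerset.sup' ⟨∅, Finset.empty_mem_powerset _⟩
        (staticEM 2 (fun _ : Fin n => (1 : ℝ))) := by
      refine le_trans ?_ (Finset.le_sup' _ (Finset.empty_mem_powerset _))
      rw [static_eq (∅ : Finset (Fin n))]
      norm_num
    rw [ge_iff_le, dpMain hn]
    have hdp_lb : (3:ℝ)/2 - 1/((n:ℝ)+1) ≤
        (3 / 2) * (1 - 1 / ((n : ℝ) + 1)) + (n : ℝ) / ((n : ℝ) + 1) ^ 2 := by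
      rw [← sub_nonneg]
      have key : (3 / 2) * (1 - 1 / ((n : ℝ) + 1)) + (n : ℝ) / ((n : ℝ) + 1) ^ 2 -
          ((3:ℝ)/2 - 1/((n:ℝ)+1)) = ((n:ℝ) - 1) / (2 * ((n:ℝ)+1)^2) := by
        field_simp
        ring
      rw [key]
      exact div_nonneg (by linarith) (by positivity)
    have hdelta : 1/((n:ℝ)+1) ≤ δ := by
      have h1 : (1:ℝ) ≤ δ * (n:ℝ) := by
        rw [div_le_iff₀ hδ] at hceil
        linarith
      rw [div_le_iff₀ hx1]
      nlinarith
    rcases le_or_gt (4/3 - δ) 0 with hneg | hpos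
    · have : (4 / 3 - δ) * Finset.univ.powerset.sup' ⟨∅, Finset.empty_mem_powerset _⟩
          (staticEM 2 (fun _ : Fin n => (1 : ℝ))) ≤ 0 := by
        nlinarith [mul_nonneg (neg_nonneg.mpr hneg) hsup_nonneg]
      have hnn : (0:ℝ) ≤ (3 / 2) * (1 - 1 / ((n : ℝ) + 1)) + (n : ℝ) / ((n : ℝ) + 1) ^ 2 := by
        have h1 : 1/((n:ℝ)+1) ≤ 1 := by
          rw [div_le_one hx1]; linarith
        have h2 : (0:ℝ) ≤ (n : ℝ) / ((n : ℝ) + 1) ^ 2 := by positivity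
        nlinarith
      linarith
    · calc (4 / 3 - δ) * Finset.univ.powerset.sup' ⟨∅, Finset.empty_mem_powerset _⟩
            (staticEM 2 (fun _ : Fin n => (1 : ℝ)))
          ≤ (4 / 3 - δ) * (9/8) := by
            exact mul_le_mul_of_nonneg_left hsup_le (le_of_lt hpos)
        _ = 3/2 - (9/8) * δ := by ring
        _ ≤ 3/2 - 1/((n:ℝ)+1) := by
            have : 1/((n:ℝ)+1) ≤ (9/8) * δ := by linarith
            linarith
        _ ≤ _ := hdp_lb
end

section
/- Assume n ≥ 2 and T ≥ 2, let ε ∈ (0,1), let v_max = max_{1≤i≤n} v_i, and set α = v_max/(1+v_max). If T·α ≥ 12·ln(nT)/ε³ or v_max ≥ 1/ε, then T·α ≥ (1−ε)·OPT^DP({1,…,n}); that is, the static policy that offers only the heaviest product, whose expected maximum load equals T·α, is a (1−ε)-approximation to the optimal dynamic policy. -/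
/-!
Every assortment sells each product with probability at most `α = v_max / (1 + v_max)`.
The value functions are bounded by any potential of the loads that dominates the maximum load
and grows in expectation by at most `c` per customer, whatever assortment is offered. The maximum
load itself is such a potential with `c = 1`, so `OPT ≤ T`; this settles `v_max ≥ 1/ε`, where
`α ≥ 1 - ε`. The soft maximum `λ⁻¹ log ∑ⱼ exp (λ ℓⱼ)` is one with `c = α (e^λ - 1) / λ`; at
`λ = ε` it gives `OPT ≤ ln n / ε + (1 + ε) T α`, and `ln n / ε ≤ ε² T α / 12` in the regime
`T α ≥ 12 ln (n T) / ε³`.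
-/

open Finset

section

variable {n : ℕ} {v : Fin n → ℝ}

lemma one_add_sum_pos (hv : ∀ i, 0 ≤ v i) (S : Finset (Fin n)) : 0 < 1 + ∑ j ∈ S, v j := by
  have := sum_nonneg fun j (_ : j ∈ S) => hv j
  linarith

lemma phi0_nonneg (hv : ∀ i, 0 ≤ v i) (S : Finset (Fin n)) : 0 ≤ phi0 v S :=
  div_nonneg zero_le_one (one_add_sum_pos hv S).le

lemma phi_nonneg (hv : ∀ i, 0 ≤ v i) (S : Finset (Fin n)) (i : Fin n) : 0 ≤ phi v S i :=
  div_nonneg (hv i) (one_add_sum_pos hv S).le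

lemma phi0_add_sum_phi (hv : ∀ i, 0 ≤ v i) (S : Finset (Fin n)) :
    phi0 v S + ∑ i ∈ S, phi v S i = 1 := by
  simp only [phi0, phi, ← sum_div, ← add_div]
  exact div_self (one_add_sum_pos hv S).ne'

lemma sum_phi_le_one (hv : ∀ i, 0 ≤ v i) (S : Finset (Fin n)) : ∑ i ∈ S, phi v S i ≤ 1 := by
  linarith [phi0_add_sum_phi hv S, phi0_nonneg hv S]

lemma phi_le_div_one_add (hv : ∀ i, 0 ≤ v i) {S : Finset (Fin n)} {i : Fin n} (hi : i ∈ S)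
    {w : ℝ} (hw : v i ≤ w) : phi v S i ≤ w / (1 + w) := by
  have hvS : v i ≤ ∑ j ∈ S, v j := single_le_sum (fun j _ => hv j) hi
  rw [phi, div_le_div_iff₀ (one_add_sum_pos hv S) (by linarith [hv i])]
  nlinarith [hv i]

theorem dpVal_le_of_drift (hv : ∀ i, 0 ≤ v i) {U : Finset (Fin n)}
    (Φ : (Fin n → ℕ) → ℝ) (c : ℝ) (hΦ : ∀ ℓ, ((univ.sup ℓ : ℕ) : ℝ) ≤ Φ ℓ)
    (hdrift : ∀ S ⊆ U, ∀ ℓ,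
      phi0 v S * Φ ℓ + ∑ i ∈ S, phi v S i * Φ (Function.update ℓ i (ℓ i + 1)) ≤ Φ ℓ + c)
    (t : ℕ) (ℓ : Fin n → ℕ) : dpVal v U t ℓ ≤ Φ ℓ + t * c := by
  induction t generalizing ℓ with
  | zero => simpa [dpVal] using hΦ ℓ
  | succ t ih =>
    rw [dpVal]
    refine sup'_le _ _ fun S hS => ?_
    calc phi0 v S * dpVal v U t ℓ
          + ∑ i ∈ S, phi v S i * dpVal v U t (Function.update ℓ i (ℓ i + 1))
        ≤ phi0 v S * (Φ ℓ + t * c)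
          + ∑ i ∈ S, phi v S i * (Φ (Function.update ℓ i (ℓ i + 1)) + t * c) :=
          add_le_add (mul_le_mul_of_nonneg_left (ih ℓ) (phi0_nonneg hv S))
            (sum_le_sum fun i _ => mul_le_mul_of_nonneg_left (ih _) (phi_nonneg hv S i))
      _ = (phi0 v S * Φ ℓ + ∑ i ∈ S, phi v S i * Φ (Function.update ℓ i (ℓ i + 1)))
          + (phi0 v S + ∑ i ∈ S, phi v S i) * (t * c) := by
          simp only [mul_add, sum_add_distrib, ← sum_mul]; ring
      _ ≤ Φ ℓ + (t + 1 : ℕ) * c := by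
          rw [phi0_add_sum_phi hv S]
          push_cast
          linarith [hdrift S (mem_powerset.1 hS) ℓ]

lemma sup_update_succ_le (ℓ : Fin n → ℕ) (i : Fin n) :
    univ.sup (Function.update ℓ i (ℓ i + 1)) ≤ univ.sup ℓ + 1 := by
  refine Finset.sup_le fun j _ => ?_
  have hj := le_sup (f := ℓ) (mem_univ j)
  rcases eq_or_ne j i with rfl | hji
  · simpa using hj
  · rw [Function.update_of_ne hji]; omega

theorem dpOpt_le (hv : ∀ i, 0 ≤ v i) (U : Finset (Fin n)) (T : ℕ) : dpOpt v U T ≤ T := by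
  have hdrift : ∀ S ⊆ U, ∀ ℓ : Fin n → ℕ,
      phi0 v S * ((univ.sup ℓ : ℕ) : ℝ) + ∑ i ∈ S, phi v S i *
        ((univ.sup (Function.update ℓ i (ℓ i + 1)) : ℕ) : ℝ)
        ≤ ((univ.sup ℓ : ℕ) : ℝ) + 1 := by
    intro S _ ℓ
    calc _ ≤ phi0 v S * ((univ.sup ℓ : ℕ) : ℝ)
          + ∑ i ∈ S, phi v S i * (((univ.sup ℓ : ℕ) : ℝ) + 1) := by
          gcongr with i
          · exact phi_nonneg hv S i
          · exact_mod_cast sup_update_succ_le ℓ i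
      _ = ((univ.sup ℓ : ℕ) : ℝ) + ∑ i ∈ S, phi v S i := by
          rw [← sum_mul, mul_add_one, ← add_assoc, ← add_mul, phi0_add_sum_phi hv S,
            one_mul]
      _ ≤ _ := by linarith [sum_phi_le_one hv S]
  have hsup : univ.sup (fun _ : Fin n => 0) = 0 := sup_bot _
  simpa [dpOpt, hsup] using dpVal_le_of_drift hv _ 1 (fun _ => le_rfl) hdrift T fun _ => 0

noncomputable def softMaxLoad (lam : ℝ) (ℓ : Fin n → ℕ) : ℝ :=
  Real.log (∑ j, Real.exp (lam * ℓ j)) / lam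

lemma sup_le_softMaxLoad {lam : ℝ} (hlam : 0 < lam) (ℓ : Fin n → ℕ) :
    ((univ.sup ℓ : ℕ) : ℝ) ≤ softMaxLoad lam ℓ := by
  rcases isEmpty_or_nonempty (Fin n) with hn | hn
  · simp [softMaxLoad, univ_eq_empty]
  obtain ⟨j, -, hj⟩ := exists_mem_eq_sup univ univ_nonempty ℓ
  rw [softMaxLoad, le_div_iff₀ hlam, hj, mul_comm,
    Real.le_log_iff_exp_le (sum_pos (fun _ _ => Real.exp_pos _) univ_nonempty)]
  exact single_le_sum (f := fun k => Real.exp (lam * ℓ k))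
    (fun k _ => (Real.exp_pos _).le) (mem_univ j)

lemma sum_exp_update_succ (lam : ℝ) (ℓ : Fin n → ℕ) (i : Fin n) :
    ∑ j, Real.exp (lam * (Function.update ℓ i (ℓ i + 1) j : ℕ))
      = ∑ j, Real.exp (lam * ℓ j) + (Real.exp lam - 1) * Real.exp (lam * ℓ i) := by
  have hterm : ∀ j, Real.exp (lam * (Function.update ℓ i (ℓ i + 1) j : ℕ))
      = Real.exp (lam * ℓ j) + if j = i then (Real.exp lam - 1) * Real.exp (lam * ℓ i) else 0 := by
    intro j
    rcases eq_or_ne j i with rfl | hji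
    · simp only [Function.update_self, Nat.cast_add, Nat.cast_one, if_true, mul_add_one,
        Real.exp_add]
      ring
    · simp [hji]
  simp only [hterm, sum_add_distrib, sum_ite_eq', mem_univ, if_true]

lemma softMaxLoad_update_succ_le {lam : ℝ} (hlam : 0 < lam) (ℓ : Fin n → ℕ) (i : Fin n) :
    softMaxLoad lam (Function.update ℓ i (ℓ i + 1)) ≤ softMaxLoad lam ℓ
      + (Real.exp lam - 1) * Real.exp (lam * ℓ i) / (lam * ∑ j, Real.exp (lam * ℓ j)) := by
  set Z := ∑ j, Real.exp (lam * ℓ j)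
  set D := (Real.exp lam - 1) * Real.exp (lam * ℓ i)
  have hZ : 0 < Z := sum_pos' (fun _ _ => (Real.exp_pos _).le)
    ⟨i, mem_univ i, Real.exp_pos _⟩
  have hD : 0 ≤ D := mul_nonneg (by linarith [Real.add_one_le_exp lam]) (Real.exp_pos _).le
  have hlog : Real.log (Z + D) ≤ Real.log Z + D / Z := by
    have := Real.log_le_sub_one_of_pos (x := (Z + D) / Z) (by positivity)
    rw [Real.log_div (by positivity) hZ.ne', add_div, div_self hZ.ne'] at this
    linarith
  rw [softMaxLoad, softMaxLoad, sum_exp_update_succ]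
  calc Real.log (Z + D) / lam ≤ (Real.log Z + D / Z) / lam :=
        div_le_div_of_nonneg_right hlog hlam.le
    _ = Real.log Z / lam + D / (lam * Z) := by field_simp

lemma softMaxLoad_drift_le (hv : ∀ i, 0 ≤ v i) {lam α : ℝ} (hlam : 0 < lam) (hα0 : 0 ≤ α)
    {S : Finset (Fin n)} (hα : ∀ i ∈ S, phi v S i ≤ α) (ℓ : Fin n → ℕ) :
    phi0 v S * softMaxLoad lam ℓ
        + ∑ i ∈ S, phi v S i * softMaxLoad lam (Function.update ℓ i (ℓ i + 1))
      ≤ softMaxLoad lam ℓ + α * (Real.exp lam - 1) / lam := by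
  set Z := ∑ j, Real.exp (lam * ℓ j)
  have hZ : 0 ≤ Z := sum_nonneg fun _ _ => (Real.exp_pos _).le
  have hrate : 0 ≤ (Real.exp lam - 1) / (lam * Z) :=
    div_nonneg (by linarith [Real.add_one_le_exp lam]) (by positivity)
  have hexp : ∑ i ∈ S, phi v S i * Real.exp (lam * ℓ i) ≤ α * Z :=
    calc ∑ i ∈ S, phi v S i * Real.exp (lam * ℓ i) ≤ ∑ i ∈ S, α * Real.exp (lam * ℓ i) :=
          sum_le_sum fun i hi =>
            mul_le_mul_of_nonneg_right (hα i hi) (Real.exp_pos _).le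
      _ = α * ∑ i ∈ S, Real.exp (lam * ℓ i) := (mul_sum _ _ _).symm
      _ ≤ α * Z := mul_le_mul_of_nonneg_left (sum_le_sum_of_subset_of_nonneg
          (subset_univ S) fun _ _ _ => (Real.exp_pos _).le) hα0
  calc _ ≤ phi0 v S * softMaxLoad lam ℓ + ∑ i ∈ S, phi v S i * (softMaxLoad lam ℓ
          + (Real.exp lam - 1) * Real.exp (lam * ℓ i) / (lam * Z)) := by
        gcongr with i
        · exact phi_nonneg hv S i
        · exact softMaxLoad_update_succ_le hlam ℓ i
    _ = (phi0 v S + ∑ i ∈ S, phi v S i) * softMaxLoad lam ℓ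
          + (∑ i ∈ S, phi v S i * Real.exp (lam * ℓ i)) * ((Real.exp lam - 1) / (lam * Z)) := by
        rw [add_mul, sum_mul, sum_mul, add_assoc, ← sum_add_distrib]
        congr 1
        exact sum_congr rfl fun i _ => by ring
    _ ≤ softMaxLoad lam ℓ + α * Z * ((Real.exp lam - 1) / (lam * Z)) := by
        rw [phi0_add_sum_phi hv S, one_mul]
        gcongr
    _ ≤ softMaxLoad lam ℓ + α * (Real.exp lam - 1) / lam := by
        gcongr softMaxLoad lam ℓ + ?_
        have hZZ : Z / Z ≤ 1 := div_self_le_one Z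
        have hrate' : 0 ≤ α * (Real.exp lam - 1) / lam :=
          div_nonneg (mul_nonneg hα0 (by linarith [Real.add_one_le_exp lam])) hlam.le
        calc α * Z * ((Real.exp lam - 1) / (lam * Z))
            = α * (Real.exp lam - 1) / lam * (Z / Z) := by ring
          _ ≤ α * (Real.exp lam - 1) / lam := mul_le_of_le_one_right hrate' hZZ

theorem dpOpt_le_log_div_add (hv : ∀ i, 0 ≤ v i) (U : Finset (Fin n)) {lam α : ℝ}
    (hlam : 0 < lam) (hα0 : 0 ≤ α) (hα : ∀ S ⊆ U, ∀ i ∈ S, phi v S i ≤ α) (T : ℕ) :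
    dpOpt v U T ≤ Real.log n / lam + T * (α * (Real.exp lam - 1) / lam) := by
  simpa [dpOpt, softMaxLoad] using dpVal_le_of_drift hv (softMaxLoad lam) _
    (sup_le_softMaxLoad hlam) (fun S hS => softMaxLoad_drift_le hv hlam hα0 (hα S hS)) T
    fun _ => 0

theorem dpOpt_le_log_div_add_one_add (hv : ∀ i, 0 ≤ v i) (U : Finset (Fin n))
    {ε α : ℝ} (hε0 : 0 < ε) (hε1 : ε ≤ 1) (hα0 : 0 ≤ α)
    (hα : ∀ S ⊆ U, ∀ i ∈ S, phi v S i ≤ α) (T : ℕ) :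
    dpOpt v U T ≤ Real.log n / ε + T * α * (1 + ε) := by
  have hexp : (Real.exp ε - 1) / ε ≤ 1 + ε := by
    have := abs_le.1 (Real.abs_exp_sub_one_sub_id_le (x := ε) (by rwa [abs_of_pos hε0]))
    rw [div_le_iff₀ hε0]
    nlinarith
  calc dpOpt v U T ≤ Real.log n / ε + T * α * ((Real.exp ε - 1) / ε) := by
        simpa only [mul_div_assoc, mul_assoc] using dpOpt_le_log_div_add hv U hε0 hα0 hα T
    _ ≤ Real.log n / ε + T * α * (1 + ε) := by gcongr

end

/-- High-weight regime: if `T·α ≥ 12·ln(nT)/ε³` or `v_max ≥ 1/ε`, where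
`α = v_max/(1+v_max)`, then the static policy offering only the heaviest product — whose
expected maximum load equals `T·α` — is a `(1-ε)`-approximation to the optimal dynamic
policy. -/
theorem heaviest_product_near_optimal_high_weight
    (n T : ℕ) (hn : 2 ≤ n) (hT : 2 ≤ T) (ε : ℝ) (hε0 : 0 < ε) (hε1 : ε < 1)
    (v : Fin n → ℝ) (hv : ∀ i, 0 < v i)
    (vmax : ℝ)
    (hvmax : vmax = Finset.univ.sup' ⟨⟨0, by omega⟩, Finset.mem_univ _⟩ v)
    (hcase : (T : ℝ) * (vmax / (1 + vmax)) ≥ 12 * Real.log ((n : ℝ) * (T : ℝ)) / ε ^ 3 ∨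
      vmax ≥ 1 / ε) :
    (T : ℝ) * (vmax / (1 + vmax)) ≥ (1 - ε) * dpOpt v Finset.univ T := by
  have hv₀ : ∀ i, 0 ≤ v i := fun i => (hv i).le
  have hvle : ∀ i, v i ≤ vmax := fun i => hvmax ▸ le_sup' v (mem_univ i)
  have hvmax₀ : 0 < vmax := (hv ⟨0, by omega⟩).trans_le (hvle _)
  set α := vmax / (1 + vmax)
  have hTα : 0 ≤ T * α := by positivity
  rcases hcase with hlog | hheavy
  · have hlogn : Real.log n / ε ≤ ε ^ 2 * (T * α) / 12 := by
      have : Real.log n ≤ Real.log (n * T) :=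
        Real.log_le_log (by positivity) (le_mul_of_one_le_right (by positivity)
          (by exact_mod_cast (by omega : 1 ≤ T)))
      rw [ge_iff_le, div_le_iff₀ (by positivity)] at hlog
      rw [div_le_iff₀ hε0]
      linarith
    have hopt := dpOpt_le_log_div_add_one_add hv₀ univ hε0 hε1.le
      (by positivity : 0 ≤ α) (fun S _ i hi => phi_le_div_one_add hv₀ hi (hvle i)) T
    calc (1 - ε) * dpOpt v univ T ≤ (1 - ε) * (T * α * (1 + ε + ε ^ 2 / 12)) :=
          mul_le_mul_of_nonneg_left (by linarith) (by linarith)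
      _ ≤ T * α := by nlinarith [mul_nonneg hTα (sq_nonneg ε), mul_nonneg hTα (pow_pos hε0 3).le]
  · have hα : 1 - ε ≤ α := by
      rw [ge_iff_le, div_le_iff₀ hε0] at hheavy
      rw [le_div_iff₀ (by positivity)]
      nlinarith
    calc (1 - ε) * dpOpt v univ T ≤ (1 - ε) * T :=
          mul_le_mul_of_nonneg_left (dpOpt_le hv₀ _ T) (by linarith)
      _ ≤ T * α := by nlinarith
end
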